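/- arXiv:1906.02802 — 4 statements merged into one kernel-verified Lean document; each statement's English description precedes it below -/
import Mathlib

section
/- The result of relaxing a sandpile state does not depend on the order in which topplings are performed: any two maximal toppling sequences from the same initial state end in the same stable state (abelian property). -/
/-- The four lattice neighbours of a point of `ℤ²`. -/
def nbrs (v : ℤ × ℤ) : List (ℤ × ℤ) :=
  [(v.1 + 1, v.2), (v.1 - 1, v.2), (v.1, v.2 + 1), (v.1, v.2 - 1)]

/-- Toppling at `v`: remove 4 grains from `v`, add one grain to each neighbour
of `v` lying inside `Γ`; grains sent outside `Γ` disappear. -/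
def topple (Γ : Finset (ℤ × ℤ)) (φ : ℤ × ℤ → ℕ) (v : ℤ × ℤ) : ℤ × ℤ → ℕ :=
  fun w => if w = v then φ w - 4 else if w ∈ Γ ∧ w ∈ nbrs v then φ w + 1 else φ w

/-- A legal toppling sequence starting from state `φ`: each toppled vertex
lies in `Γ` and carries at least 4 grains at the moment it is toppled. -/
def IsToppleSeq (Γ : Finset (ℤ × ℤ)) : (ℤ × ℤ → ℕ) → List (ℤ × ℤ) → Prop
  | _, [] => True
  | φ, v :: L => v ∈ Γ ∧ 4 ≤ φ v ∧ IsToppleSeq Γ (topple Γ φ v) L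

/-- The state obtained from `φ` after performing the topplings in `L`. -/
def relax (Γ : Finset (ℤ × ℤ)) (φ : ℤ × ℤ → ℕ) (L : List (ℤ × ℤ)) : ℤ × ℤ → ℕ :=
  L.foldl (topple Γ) φ

/-- A state is stable if every vertex of `Γ` carries at most 3 grains. -/
def Stable (Γ : Finset (ℤ × ℤ)) (φ : ℤ × ℤ → ℕ) : Prop := ∀ v ∈ Γ, φ v ≤ 3

/-- Toppling at a vertex other than `u` does not decrease the value at `u`. -/
lemma le_topple (Γ : Finset (ℤ × ℤ)) (φ : ℤ × ℤ → ℕ) (v u : ℤ × ℤ) (hu : u ≠ v) :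
    φ u ≤ topple Γ φ v u := by
  simp only [topple, if_neg hu]
  split <;> omega

/-- Topplings at two distinct legal vertices commute. -/
lemma topple_comm (Γ : Finset (ℤ × ℤ)) (φ : ℤ × ℤ → ℕ) (v w : ℤ × ℤ) (hvw : v ≠ w)
    (h4v : 4 ≤ φ v) (h4w : 4 ≤ φ w) :
    topple Γ (topple Γ φ v) w = topple Γ (topple Γ φ w) v := by
  funext u
  simp only [topple]
  split_ifs <;> simp_all <;> omega

/-- Exchange lemma: if `v` is legal at `φ` and `L` is a toppling sequence from `φ`
reaching a stable state, then after toppling `v` first there is a toppling sequence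
reaching the same state. -/
lemma exchange (Γ : Finset (ℤ × ℤ)) (L : List (ℤ × ℤ)) :
    ∀ (φ : ℤ × ℤ → ℕ) (v : ℤ × ℤ), v ∈ Γ → 4 ≤ φ v → IsToppleSeq Γ φ L →
      Stable Γ (relax Γ φ L) →
      ∃ L', IsToppleSeq Γ (topple Γ φ v) L' ∧
        relax Γ (topple Γ φ v) L' = relax Γ φ L := by
  induction L with
  | nil =>
    intro φ v hv h4 _ hs
    exact absurd (hs v hv) (by simp [relax]; omega)
  | cons w M ih =>
    intro φ v hv h4 hseq hs
    obtain ⟨hwΓ, h4w, hM⟩ := hseq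
    by_cases hwv : w = v
    · subst hwv
      exact ⟨M, hM, rfl⟩
    · have h4v' : 4 ≤ topple Γ φ w v := le_topple Γ φ w v (Ne.symm hwv) |>.trans' h4
      have hs' : Stable Γ (relax Γ (topple Γ φ w) M) := hs
      obtain ⟨M', hM'seq, hM'rel⟩ := ih (topple Γ φ w) v hv h4v' hM hs'
      have hc : topple Γ (topple Γ φ w) v = topple Γ (topple Γ φ v) w :=
        topple_comm Γ φ w v hwv h4w h4
      refine ⟨w :: M', ⟨hwΓ, ?_, ?_⟩, ?_⟩
      · exact le_trans h4w (le_topple Γ φ v w hwv)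
      · rwa [← hc]
      · show relax Γ (topple Γ (topple Γ φ v) w) M' = _
        rw [← hc]; exact hM'rel

/-- Abelian property: any two maximal toppling sequences (relaxations) from the
same initial state end in the same stable state. -/
theorem sandpile_abelian (Γ : Finset (ℤ × ℤ)) (φ : ℤ × ℤ → ℕ)
    (L₁ L₂ : List (ℤ × ℤ))
    (h₁ : IsToppleSeq Γ φ L₁) (h₂ : IsToppleSeq Γ φ L₂)
    (s₁ : Stable Γ (relax Γ φ L₁)) (s₂ : Stable Γ (relax Γ φ L₂)) :
    relax Γ φ L₁ = relax Γ φ L₂ := by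
  induction L₁ generalizing φ L₂ with
  | nil =>
    cases L₂ with
    | nil => rfl
    | cons w M =>
      obtain ⟨hwΓ, h4w, _⟩ := h₂
      have := s₁ w hwΓ
      simp [relax] at this
      omega
  | cons v L₁' ih =>
    obtain ⟨hvΓ, h4v, hL₁'⟩ := h₁
    obtain ⟨L₂', hseq', hrel'⟩ := exchange Γ L₂ φ v hvΓ h4v h₂ s₂
    have := ih (topple Γ φ v) L₂' hL₁' hseq' s₁ (by rwa [hrel'])
    calc relax Γ φ (v :: L₁') = relax Γ (topple Γ φ v) L₁' := rfl
      _ = relax Γ (topple Γ φ v) L₂' := this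
      _ = relax Γ φ L₂ := hrel'
end

section
/- If f and g are Ω-tropical series with f ≤ g, and both have finite point P ⊂ Ω° contained in their corner loci, then the pointwise infimum over all Ω-tropical series g with g ≥ f and P ⊂ C(g) is itself an Ω-tropical series, i.e., the operator G_P is well defined. -/
open Set

/-- A tropical monomial `c_{ij} + i·x + j·y`. -/
def mon (c : ℤ × ℤ → ℝ) (ij : ℤ × ℤ) (p : ℝ × ℝ) : ℝ :=
  c ij + (ij.1 : ℝ) * p.1 + (ij.2 : ℝ) * p.2

/-- `f` is an `Ω`-tropical series with support `A` and coefficients `c`: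
nonnegative on `Ω`, vanishing on `∂Ω`, and on the interior of `Ω` it equals the
(attained) minimum of the monomials `c_{ij} + i·x + j·y`, `(i,j) ∈ A`. -/
def IsTropSeriesWith (Ω : Set (ℝ × ℝ)) (A : Set (ℤ × ℤ)) (c : ℤ × ℤ → ℝ)
    (f : ℝ × ℝ → ℝ) : Prop :=
  A.Nonempty ∧ (∀ p ∈ Ω, 0 ≤ f p) ∧ (∀ p ∈ frontier Ω, f p = 0) ∧
    ∀ p ∈ interior Ω, IsLeast ((fun ij => mon c ij p) '' A) (f p)

/-- `f` is an `Ω`-tropical series. -/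
def IsOmegaTropical (Ω : Set (ℝ × ℝ)) (f : ℝ × ℝ → ℝ) : Prop :=
  ∃ A c, IsTropSeriesWith Ω A c f

/-- The tropical curve `C(f)`: points of the interior of `Ω` where `f` is not
smooth. -/
def cornerLocus (Ω : Set (ℝ × ℝ)) (f : ℝ × ℝ → ℝ) : Set (ℝ × ℝ) :=
  {p ∈ interior Ω | ¬ DifferentiableAt ℝ f p}

/-- The operator `G_P`: the pointwise infimum of all `Ω`-tropical series `g ≥ f`
whose tropical curve contains `P`. -/
noncomputable def GP (Ω : Set (ℝ × ℝ)) (P : Set (ℝ × ℝ)) (f : ℝ × ℝ → ℝ) :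
    ℝ × ℝ → ℝ :=
  fun p => sInf {y | ∃ g, IsOmegaTropical Ω g ∧ (∀ q ∈ Ω, f q ≤ g q) ∧
    P ⊆ cornerLocus Ω g ∧ y = g p}

/-- The identically zero function on the plane. -/
def zeroFn : ℝ × ℝ → ℝ := fun _ => 0

/-- The genus of `C(f)`: the number of connected components of
`Ω° \ C(f)` whose closure does not meet `∂Ω`. -/
noncomputable def genus (Ω : Set (ℝ × ℝ)) (f : ℝ × ℝ → ℝ) : ℕ :=
  Set.ncard {U : Set (ℝ × ℝ) |
    (∃ p ∈ interior Ω \ cornerLocus Ω f,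
      U = connectedComponentIn (interior Ω \ cornerLocus Ω f) p) ∧
    closure U ∩ frontier Ω = ∅}

/-- Two point configurations give tropical curves of the same combinatorial
type: some homeomorphism of the plane identifies the curves and the points. -/
def SameCombType (Ω : Set (ℝ × ℝ)) (P Q : Finset (ℝ × ℝ)) : Prop :=
  ∃ h : (ℝ × ℝ) ≃ₜ (ℝ × ℝ),
    h '' cornerLocus Ω (GP Ω ↑P zeroFn) = cornerLocus Ω (GP Ω ↑Q zeroFn) ∧
    h '' (P : Set (ℝ × ℝ)) = (Q : Set (ℝ × ℝ))

/-- `P` is generic: any sufficiently small perturbation of the points of `P`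
does not change the combinatorial type of the curve `C(G_P 0_Ω)`. -/
def GenericPts (Ω : Set (ℝ × ℝ)) (P : Finset (ℝ × ℝ)) : Prop :=
  ∃ ε > 0, ∀ g : ℝ × ℝ → ℝ × ℝ,
    (∀ p ∈ P, dist p (g p) < ε) → SameCombType Ω P (P.image g)

/-- `G_P` is well defined: whenever some `Ω`-tropical series `g ≥ f` with
`P ⊆ C(g)` exists, the pointwise infimum `G_P f` of all such series is itself
an `Ω`-tropical series. -/
theorem GP_well_defined (Ω : Set (ℝ × ℝ)) (hconv : Convex ℝ Ω)
    (hcomp : IsCompact Ω) (P : Finset (ℝ × ℝ)) (hP : ↑P ⊆ interior Ω)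
    (f : ℝ × ℝ → ℝ) (hf : IsOmegaTropical Ω f)
    (hex : ∃ g, IsOmegaTropical Ω g ∧ (∀ q ∈ Ω, f q ≤ g q) ∧
      ↑P ⊆ cornerLocus Ω g) :
    IsOmegaTropical Ω (GP Ω ↑P f) := by
  classical
  obtain ⟨g₀, hg₀t, hg₀f, hg₀P⟩ := hex
  obtain ⟨Af, cf, hAf⟩ := hf
  have hfnn : ∀ p ∈ Ω, 0 ≤ f p := hAf.2.1
  have hΩcl : frontier Ω ⊆ Ω := hcomp.isClosed.frontier_subset
  set V : ℝ × ℝ → Set ℝ := fun p => {y | ∃ g, IsOmegaTropical Ω g ∧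
      (∀ q ∈ Ω, f q ≤ g q) ∧ (↑P : Set (ℝ × ℝ)) ⊆ cornerLocus Ω g ∧ y = g p}
    with hVdef
  have hGPeq : ∀ p, GP Ω ↑P f p = sInf (V p) := fun p => rfl
  have hVne : ∀ p, (V p).Nonempty := fun p => ⟨g₀ p, g₀, hg₀t, hg₀f, hg₀P, rfl⟩
  have hVlb : ∀ p ∈ Ω, ∀ y ∈ V p, f p ≤ y := by
    rintro p hp y ⟨g, -, hgf, -, rfl⟩; exact hgf p hp
  have hGPge : ∀ p ∈ Ω, f p ≤ GP Ω ↑P f p := fun p hp =>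
    le_csInf (hVne p) (hVlb p hp)
  have hGPle : ∀ p ∈ Ω, ∀ y ∈ V p, GP Ω ↑P f p ≤ y := fun p hp y hy =>
    csInf_le ⟨f p, hVlb p hp⟩ hy
  set T : ℤ × ℤ → Set ℝ := fun ij =>
    {t | ∃ g A c, IsTropSeriesWith Ω A c g ∧ (∀ q ∈ Ω, f q ≤ g q) ∧
      (↑P : Set (ℝ × ℝ)) ⊆ cornerLocus Ω g ∧ ij ∈ A ∧ t = c ij} with hTdef
  set Astar : Set (ℤ × ℤ) := {ij | (T ij).Nonempty} with hAdef
  set cstar : ℤ × ℤ → ℝ := fun ij => sInf (T ij) with hcdef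
  -- every coefficient in `T ij` gives a monomial ≥ GP at interior points
  have hTmon : ∀ p ∈ interior Ω, ∀ ij : ℤ × ℤ, ∀ t ∈ T ij,
      GP Ω ↑P f p ≤ t + (ij.1 : ℝ) * p.1 + (ij.2 : ℝ) * p.2 := by
    rintro p hp ij t ⟨g, A, c, hrep, hgf, hgP, hijA, rfl⟩
    have h1 : g p ≤ mon c ij p := (hrep.2.2.2 p hp).2 ⟨ij, hijA, rfl⟩
    have h2 : GP Ω ↑P f p ≤ g p :=
      hGPle p (interior_subset hp) (g p) ⟨g, ⟨A, c, hrep⟩, hgf, hgP, rfl⟩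
    calc GP Ω ↑P f p ≤ g p := h2
      _ ≤ _ := h1
  have hT0 : ∀ p ∈ interior Ω, ∀ ij : ℤ × ℤ, ∀ t ∈ T ij,
      0 ≤ t + (ij.1 : ℝ) * p.1 + (ij.2 : ℝ) * p.2 := by
    intro p hp ij t ht
    have h1 := hTmon p hp ij t ht
    have h2 := hGPge p (interior_subset hp)
    have h3 := hfnn p (interior_subset hp)
    linarith
  -- ball bound
  have hTball : ∀ p : ℝ × ℝ, ∀ r > (0 : ℝ), Metric.ball p r ⊆ interior Ω →
      ∀ ij : ℤ × ℤ, ∀ t ∈ T ij,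
      r / 2 * (|(ij.1 : ℝ)| + |(ij.2 : ℝ)|) ≤ t + (ij.1 : ℝ) * p.1 + (ij.2 : ℝ) * p.2 := by
    intro p r hr hball ij t ht
    set si : ℝ := if 0 ≤ ij.1 then 1 else -1 with hsi
    set sj : ℝ := if 0 ≤ ij.2 then 1 else -1 with hsj
    have habsi : (ij.1 : ℝ) * si = |(ij.1 : ℝ)| := by
      rcases le_or_gt 0 ij.1 with h | h
      · have : (0:ℝ) ≤ (ij.1 : ℝ) := by exact_mod_cast h
        simp [hsi, h, abs_of_nonneg this]
      · have h' : ¬ (0 ≤ ij.1) := not_le.mpr h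
        have : (ij.1 : ℝ) < 0 := by exact_mod_cast h
        simp [hsi, h', abs_of_neg this]
    have habsj : (ij.2 : ℝ) * sj = |(ij.2 : ℝ)| := by
      rcases le_or_gt 0 ij.2 with h | h
      · have : (0:ℝ) ≤ (ij.2 : ℝ) := by exact_mod_cast h
        simp [hsj, h, abs_of_nonneg this]
      · have h' : ¬ (0 ≤ ij.2) := not_le.mpr h
        have : (ij.2 : ℝ) < 0 := by exact_mod_cast h
        simp [hsj, h', abs_of_neg this]
    have hsiabs : |si| = 1 := by
      rcases le_or_gt 0 ij.1 with h | h
      · simp [hsi, h]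
      · simp [hsi, not_le.mpr h]
    have hsjabs : |sj| = 1 := by
      rcases le_or_gt 0 ij.2 with h | h
      · simp [hsj, h]
      · simp [hsj, not_le.mpr h]
    set q : ℝ × ℝ := (p.1 - r / 2 * si, p.2 - r / 2 * sj) with hq
    have hqball : q ∈ Metric.ball p r := by
      have h1 : dist q.1 p.1 = r / 2 := by
        rw [Real.dist_eq]
        simp only [hq]
        rw [show p.1 - r / 2 * si - p.1 = -(r / 2 * si) by ring, abs_neg, abs_mul, hsiabs]
        rw [abs_of_nonneg (by linarith : (0:ℝ) ≤ r / 2)]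
        ring
      have h2 : dist q.2 p.2 = r / 2 := by
        rw [Real.dist_eq]
        simp only [hq]
        rw [show p.2 - r / 2 * sj - p.2 = -(r / 2 * sj) by ring, abs_neg, abs_mul, hsjabs]
        rw [abs_of_nonneg (by linarith : (0:ℝ) ≤ r / 2)]
        ring
      have : dist q p = r / 2 := by
        rw [Prod.dist_eq, h1, h2, max_self]
      rw [Metric.mem_ball, this]
      linarith
    have h0 := hT0 q (hball hqball) ij t ht
    have hq1 : q.1 = p.1 - r / 2 * si := rfl
    have hq2 : q.2 = p.2 - r / 2 * sj := rfl
    rw [hq1, hq2] at h0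
    have hexp : (ij.1 : ℝ) * (p.1 - r / 2 * si) + (ij.2 : ℝ) * (p.2 - r / 2 * sj)
        = (ij.1 : ℝ) * p.1 + (ij.2 : ℝ) * p.2
          - r / 2 * ((ij.1 : ℝ) * si + (ij.2 : ℝ) * sj) := by ring
    rw [habsi, habsj] at hexp
    linarith [h0, hexp]
  refine ⟨Astar, cstar, ?_, ?_, ?_, ?_⟩
  · obtain ⟨A₀, c₀, h₀⟩ := hg₀t
    obtain ⟨ij, hij⟩ := h₀.1
    exact ⟨ij, c₀ ij, g₀, A₀, c₀, h₀, hg₀f, hg₀P, hij, rfl⟩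
  · intro p hp
    exact le_trans (hfnn p hp) (hGPge p hp)
  · intro p hp
    have h0 : (0 : ℝ) ∈ V p := by
      obtain ⟨A₀, c₀, h₀⟩ := hg₀t
      exact ⟨g₀, ⟨A₀, c₀, h₀⟩, hg₀f, hg₀P, (h₀.2.2.1 p hp).symm⟩
    have hsub : V p = {0} := by
      apply Set.eq_singleton_iff_unique_mem.mpr
      refine ⟨h0, ?_⟩
      rintro y ⟨g, ⟨A, c, hrep⟩, -, -, rfl⟩
      exact hrep.2.2.1 p hp
    rw [hGPeq, hsub]
    exact csInf_singleton 0
  · intro p hp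
    have hpΩ : p ∈ Ω := interior_subset hp
    have hlb : ∀ ij ∈ Astar, GP Ω ↑P f p ≤ mon cstar ij p := by
      intro ij hij
      have h1 : GP Ω ↑P f p - ((ij.1 : ℝ) * p.1 + (ij.2 : ℝ) * p.2) ≤ sInf (T ij) :=
        le_csInf hij (fun t ht => by have := hTmon p hp ij t ht; linarith)
      have h2 : cstar ij = sInf (T ij) := rfl
      simp only [mon, h2]
      linarith
    have happrox : ∀ ε > (0 : ℝ), ∃ ij ∈ Astar, mon cstar ij p < GP Ω ↑P f p + ε := by
      intro ε hε
      obtain ⟨y, hy, hylt⟩ := Real.lt_sInf_add_pos (hVne p) hε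
      obtain ⟨g, ⟨A, c, hrep⟩, hgf, hgP, rfl⟩ := hy
      obtain ⟨ij, hijA, hmonij⟩ := (hrep.2.2.2 p hp).1
      have hct : c ij ∈ T ij := ⟨g, A, c, hrep, hgf, hgP, hijA, rfl⟩
      have hbdd : BddBelow (T ij) :=
        ⟨-((ij.1 : ℝ) * p.1 + (ij.2 : ℝ) * p.2),
          fun t ht => by have := hT0 p hp ij t ht; linarith⟩
      have hle : cstar ij ≤ c ij := csInf_le hbdd hct
      refine ⟨ij, ⟨c ij, hct⟩, ?_⟩
      have hmm : mon cstar ij p ≤ mon c ij p := by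
        simp only [mon]; linarith
      calc mon cstar ij p ≤ mon c ij p := hmm
        _ = g p := hmonij
        _ < GP Ω ↑P f p + ε := by rw [hGPeq]; exact hylt
    obtain ⟨r, hr, hball⟩ := Metric.isOpen_iff.mp isOpen_interior p hp
    have hbd : ∀ ij ∈ Astar, r / 2 * (|(ij.1 : ℝ)| + |(ij.2 : ℝ)|) ≤ mon cstar ij p := by
      intro ij hij
      have h1 : r / 2 * (|(ij.1 : ℝ)| + |(ij.2 : ℝ)|)
          - ((ij.1 : ℝ) * p.1 + (ij.2 : ℝ) * p.2) ≤ sInf (T ij) :=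
        le_csInf hij (fun t ht => by have := hTball p r hr hball ij t ht; linarith)
      have h2 : cstar ij = sInf (T ij) := rfl
      simp only [mon, h2]
      linarith
    set K : ℝ := GP Ω ↑P f p + 1 with hK
    set N : ℤ := ⌈2 * K / r⌉ with hN
    set S : Set (ℤ × ℤ) := {ij ∈ Astar | mon cstar ij p < K} with hS
    have hSsub : S ⊆ Set.Icc ((-N, -N) : ℤ × ℤ) (N, N) := by
      rintro ⟨i, j⟩ ⟨hA, hlt⟩
      have h1 := hbd _ hA
      have habs : |(i : ℝ)| + |(j : ℝ)| ≤ 2 * K / r := by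
        rw [le_div_iff₀ hr]
        nlinarith [abs_nonneg (i : ℝ), abs_nonneg (j : ℝ)]
      have hceil : (2 * K / r : ℝ) ≤ (N : ℝ) := Int.le_ceil _
      have hi : |(i : ℝ)| ≤ (N : ℝ) := by
        have := abs_nonneg (j : ℝ); linarith
      have hj : |(j : ℝ)| ≤ (N : ℝ) := by
        have := abs_nonneg (i : ℝ); linarith
      have hi' : |i| ≤ N := by exact_mod_cast hi
      have hj' : |j| ≤ N := by exact_mod_cast hj
      rw [Set.mem_Icc, Prod.mk_le_mk, Prod.mk_le_mk]
      exact ⟨⟨by linarith [neg_abs_le i], by linarith [neg_abs_le j]⟩,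
        le_trans (le_abs_self i) hi', le_trans (le_abs_self j) hj'⟩
    have hfin : S.Finite := (Set.finite_Icc _ _).subset hSsub
    have hne : S.Nonempty := by
      obtain ⟨ij, hijA, hlt⟩ := happrox 1 one_pos
      exact ⟨ij, hijA, hlt⟩
    obtain ⟨ij₀, hij₀S, hmin⟩ := Set.exists_min_image S (fun ij => mon cstar ij p) hfin hne
    obtain ⟨hij₀A, hij₀K⟩ := hij₀S
    have heq : mon cstar ij₀ p = GP Ω ↑P f p := by
      refine le_antisymm ?_ (hlb _ hij₀A)
      by_contra hcon
      push_neg at hcon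
      obtain ⟨ij, hijA, hlt⟩ :=
        happrox (mon cstar ij₀ p - GP Ω ↑P f p) (by linarith)
      have hlt' : mon cstar ij p < mon cstar ij₀ p := by linarith
      have hltK : mon cstar ij p < K := lt_trans hlt' hij₀K
      have := hmin ij ⟨hijA, hltK⟩
      linarith
    constructor
    · exact ⟨ij₀, hij₀A, heq⟩
    · rintro y ⟨ij, hij, rfl⟩
      exact hlb ij hij
end

section
/- For f = G_P 0_Ω with P a finite generic set of points in Ω°, every connected component of Ω° \ C(f) whose closure does not meet ∂Ω contains a point of P in its closure. -/
open Set

/-- the linear part of a monomial as a CLM -/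
noncomputable def monL (ij : ℤ × ℤ) : (ℝ × ℝ) →L[ℝ] ℝ :=
  (ij.1 : ℝ) • ContinuousLinearMap.fst ℝ ℝ ℝ + (ij.2 : ℝ) • ContinuousLinearMap.snd ℝ ℝ ℝ

lemma mon_hasFDerivAt (c : ℤ × ℤ → ℝ) (ij : ℤ × ℤ) (x : ℝ × ℝ) :
    HasFDerivAt (mon c ij) (monL ij) x := by
  have h1 : HasFDerivAt (fun p : ℝ × ℝ => (ij.1 : ℝ) * p.1)
      ((ij.1 : ℝ) • ContinuousLinearMap.fst ℝ ℝ ℝ) x := (hasFDerivAt_fst).const_mul _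
  have h2 : HasFDerivAt (fun p : ℝ × ℝ => (ij.2 : ℝ) * p.2)
      ((ij.2 : ℝ) • ContinuousLinearMap.snd ℝ ℝ ℝ) x := (hasFDerivAt_snd).const_mul _
  have := ((hasFDerivAt_const (c ij) x).add h1).add h2
  rw [zero_add] at this
  exact this

lemma mon_differentiable (c : ℤ × ℤ → ℝ) (ij : ℤ × ℤ) : Differentiable ℝ (mon c ij) :=
  fun x => (mon_hasFDerivAt c ij x).differentiableAt

lemma mon_continuous (c : ℤ × ℤ → ℝ) (ij : ℤ × ℤ) : Continuous (mon c ij) :=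
  (mon_differentiable c ij).continuous

lemma monL_inj {a b : ℤ × ℤ} (h : monL a = monL b) : a = b := by
  have h1 := congrArg (fun L : (ℝ × ℝ) →L[ℝ] ℝ => L (1, 0)) h
  have h2 := congrArg (fun L : (ℝ × ℝ) →L[ℝ] ℝ => L (0, 1)) h
  simp [monL] at h1 h2
  exact Prod.ext (by exact_mod_cast h1) (by exact_mod_cast h2)

/-- If `f ≤ mon c a` and `f ≤ mon c b` near `x`, with equality at `x`, and `a ≠ b`,
then `f` is not differentiable at `x`. -/
lemma not_differentiable_of_two_active {f : ℝ × ℝ → ℝ} {c : ℤ × ℤ → ℝ} {a b : ℤ × ℤ}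
    {x : ℝ × ℝ} (hab : a ≠ b)
    (ha : ∀ᶠ y in nhds x, f y ≤ mon c a y) (hb : ∀ᶠ y in nhds x, f y ≤ mon c b y)
    (hea : f x = mon c a x) (heb : f x = mon c b x) :
    ¬ DifferentiableAt ℝ f x := by
  intro hd
  have key : ∀ (d : ℤ × ℤ), (∀ᶠ y in nhds x, f y ≤ mon c d y) → f x = mon c d x →
      fderiv ℝ f x = monL d := by
    intro d hle he
    have hdiff : DifferentiableAt ℝ (fun y => f y - mon c d y) x :=
      hd.sub ((mon_hasFDerivAt c d x).differentiableAt)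
    have hmax : IsLocalMax (fun y => f y - mon c d y) x := by
      filter_upwards [hle] with y hy
      simp only [he, sub_self, sub_nonpos]
      exact hy
    have := hmax.fderiv_eq_zero
    have hsub : fderiv ℝ (fun y => f y - mon c d y) x
        = fderiv ℝ f x - monL d := by
      rw [fderiv_fun_sub hd ((mon_hasFDerivAt c d x).differentiableAt),
        (mon_hasFDerivAt c d x).fderiv]
    rw [hsub] at this
    exact sub_eq_zero.mp this
  exact hab (monL_inj ((key a ha hea).symm.trans (key b hb heb)))



lemma mon_coercive {c : ℤ × ℤ → ℝ} {ij : ℤ × ℤ} {x : ℝ × ℝ} {r : ℝ} (hr : 0 ≤ r)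
    (h : ∀ y ∈ Metric.closedBall x r, 0 ≤ mon c ij y) :
    r * |(ij.1 : ℝ)| ≤ mon c ij x ∧ r * |(ij.2 : ℝ)| ≤ mon c ij x := by
  have hmem : ∀ u v : ℝ, |u| ≤ r → |v| ≤ r → (x.1 + u, x.2 + v) ∈ Metric.closedBall x r := by
    intro u v hu hv
    rw [Metric.mem_closedBall, Prod.dist_eq]
    simp [Real.dist_eq, abs_le] at *
    constructor <;> constructor <;> linarith [hu.1, hu.2, hv.1, hv.2]
  have key : ∀ u v : ℝ, |u| ≤ r → |v| ≤ r →
      (ij.1 : ℝ) * u + (ij.2 : ℝ) * v ≤ mon c ij x := by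
    intro u v hu hv
    have := h _ (hmem (-u) (-v) (by simpa using hu) (by simpa using hv))
    simp only [mon] at this ⊢
    nlinarith [this]
  constructor
  · rcases le_or_gt 0 (ij.1 : ℝ) with h1 | h1
    · have := key r 0 (by rw [abs_of_nonneg hr]) (by simpa using hr)
      rw [abs_of_nonneg h1]; nlinarith
    · have := key (-r) 0 (by rw [abs_neg, abs_of_nonneg hr]) (by simpa using hr)
      rw [abs_of_neg h1]; nlinarith
  · rcases le_or_gt 0 (ij.2 : ℝ) with h1 | h1
    · have := key 0 r (by simpa using hr) (by rw [abs_of_nonneg hr])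
      rw [abs_of_nonneg h1]; nlinarith
    · have := key 0 (-r) (by simpa using hr) (by rw [abs_neg, abs_of_nonneg hr])
      rw [abs_of_neg h1]; nlinarith

lemma finite_small (B : ℝ) : Set.Finite {ij : ℤ × ℤ | |(ij.1 : ℝ)| ≤ B ∧ |(ij.2 : ℝ)| ≤ B} := by
  have : {ij : ℤ × ℤ | |(ij.1 : ℝ)| ≤ B ∧ |(ij.2 : ℝ)| ≤ B}
      ⊆ Set.Icc (-⌈B⌉, -⌈B⌉) (⌈B⌉, ⌈B⌉) := by
    rintro ⟨i, j⟩ ⟨hi, hj⟩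
    have hi' : |(i : ℝ)| ≤ (⌈B⌉ : ℝ) := hi.trans (Int.le_ceil B)
    have hj' : |(j : ℝ)| ≤ (⌈B⌉ : ℝ) := hj.trans (Int.le_ceil B)
    rw [abs_le] at hi' hj'
    exact ⟨⟨by exact_mod_cast hi'.1, by exact_mod_cast hj'.1⟩,
      ⟨by exact_mod_cast hi'.2, by exact_mod_cast hj'.2⟩⟩
  exact (Set.finite_Icc _ _).subset this

/-- Lipschitz-type estimate for monomials. -/
lemma mon_dist_le {c : ℤ × ℤ → ℝ} {ij : ℤ × ℤ} {x y : ℝ × ℝ} :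
    |mon c ij y - mon c ij x| ≤ (|(ij.1 : ℝ)| + |(ij.2 : ℝ)|) * dist y x := by
  have h1 : |y.1 - x.1| ≤ dist y x := by
    rw [Prod.dist_eq, Real.dist_eq]; exact le_max_left _ _
  have h2 : |y.2 - x.2| ≤ dist y x := by
    rw [Prod.dist_eq, Real.dist_eq]; exact le_max_right _ _
  have : mon c ij y - mon c ij x = (ij.1 : ℝ) * (y.1 - x.1) + (ij.2 : ℝ) * (y.2 - x.2) := by
    simp [mon]; ring
  rw [this]
  calc |(ij.1 : ℝ) * (y.1 - x.1) + (ij.2 : ℝ) * (y.2 - x.2)|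
      ≤ |(ij.1 : ℝ) * (y.1 - x.1)| + |(ij.2 : ℝ) * (y.2 - x.2)| := abs_add_le _ _
    _ = |(ij.1 : ℝ)| * |y.1 - x.1| + |(ij.2 : ℝ)| * |y.2 - x.2| := by rw [abs_mul, abs_mul]
    _ ≤ |(ij.1 : ℝ)| * dist y x + |(ij.2 : ℝ)| * dist y x := by
        nlinarith [h1, h2, abs_nonneg ((ij.1:ℝ)), abs_nonneg ((ij.2:ℝ)), abs_nonneg (y.1-x.1), abs_nonneg (y.2-x.2)]
    _ = _ := by ring

lemma tail_bound {A : Set (ℤ × ℤ)} {c : ℤ × ℤ → ℝ} {x : ℝ × ℝ} {r : ℝ} (hr : 0 < r)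
    (h0 : ∀ ij ∈ A, ∀ y ∈ Metric.closedBall x r, 0 ≤ mon c ij y)
    {a₀ : ℤ × ℤ} (ha₀ : a₀ ∈ A) :
    ∃ (ρ : ℝ) (T : Finset (ℤ × ℤ)), 0 < ρ ∧ ρ ≤ r ∧ ↑T ⊆ A ∧ a₀ ∈ T ∧
      ∀ y ∈ Metric.ball x ρ, ∀ ij ∈ A, ij ∉ T → mon c a₀ y + 1 < mon c ij y := by
  set M := mon c a₀ x with hMdef
  have hM0 : 0 ≤ M := h0 a₀ ha₀ x (Metric.mem_closedBall_self hr.le)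
  set K := 2 * M + 6 with hKdef
  have hK0 : 0 < K := by positivity
  have hfin : (A ∩ {ij : ℤ × ℤ | |(ij.1 : ℝ)| ≤ K / r ∧ |(ij.2 : ℝ)| ≤ K / r}).Finite :=
    (finite_small (K / r)).inter_of_right A
  set T := hfin.toFinset with hTdef
  have hTsub : ↑T ⊆ A := by rw [hTdef, Set.Finite.coe_toFinset]; exact Set.inter_subset_left
  have hcoa₀ := mon_coercive hr.le (h0 a₀ ha₀)
  have ha₀T : a₀ ∈ T := by
    rw [hTdef, Set.Finite.mem_toFinset]
    refine ⟨ha₀, ?_, ?_⟩ <;> rw [le_div_iff₀ hr] <;>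
      [nlinarith [hcoa₀.1]; nlinarith [hcoa₀.2]]
  set ρ := min (r / 4) (1 / (|(a₀.1 : ℝ)| + |(a₀.2 : ℝ)| + 1)) with hρdef
  have hρ0 : 0 < ρ := by
    apply lt_min (by positivity)
    positivity
  refine ⟨ρ, T, hρ0, (min_le_left _ _).trans (by linarith), hTsub, ha₀T, ?_⟩
  intro y hy ij hij hijT
  have hyd : dist y x < ρ := Metric.mem_ball.mp hy
  have hyd0 : 0 ≤ dist y x := dist_nonneg
  have hbig : K / r < |(ij.1 : ℝ)| ∨ K / r < |(ij.2 : ℝ)| := by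
    by_contra hcon
    push_neg at hcon
    exact hijT (by rw [hTdef, Set.Finite.mem_toFinset]; exact ⟨hij, hcon.1, hcon.2⟩)
  have hco := mon_coercive hr.le (h0 ij hij)
  have hKlt : K < mon c ij x := by
    rcases hbig with h | h
    · have : K < r * |(ij.1 : ℝ)| := by rwa [div_lt_iff₀ hr, mul_comm] at h
      linarith [hco.1]
    · have : K < r * |(ij.2 : ℝ)| := by rwa [div_lt_iff₀ hr, mul_comm] at h
      linarith [hco.2]
  -- |i| + |j| ≤ 2 * mon c ij x / r
  have hij1 : |(ij.1 : ℝ)| ≤ mon c ij x / r := by rw [le_div_iff₀ hr]; nlinarith [hco.1]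
  have hij2 : |(ij.2 : ℝ)| ≤ mon c ij x / r := by rw [le_div_iff₀ hr]; nlinarith [hco.2]
  have hρr : ρ ≤ r / 4 := min_le_left _ _
  have hlow : mon c ij x / 2 ≤ mon c ij y := by
    have hd := abs_le.mp (mon_dist_le (c := c) (ij := ij) (x := x) (y := y))
    have hmon0 : 0 ≤ mon c ij x := by linarith
    have h1 : (|(ij.1 : ℝ)| + |(ij.2 : ℝ)|) * dist y x
        ≤ (mon c ij x / r + mon c ij x / r) * (r / 4) :=
      mul_le_mul (by linarith) (by linarith) hyd0
        (add_nonneg (div_nonneg hmon0 hr.le) (div_nonneg hmon0 hr.le))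
    have h2 : (mon c ij x / r + mon c ij x / r) * (r / 4) = mon c ij x / 2 := by
      field_simp; ring
    linarith [hd.1]
  have hρa : ρ * (|(a₀.1 : ℝ)| + |(a₀.2 : ℝ)|) ≤ 1 := by
    have h1 : ρ ≤ 1 / (|(a₀.1 : ℝ)| + |(a₀.2 : ℝ)| + 1) := min_le_right _ _
    have h2 : 0 < |(a₀.1 : ℝ)| + |(a₀.2 : ℝ)| + 1 := by positivity
    rw [le_div_iff₀ h2] at h1
    nlinarith [abs_nonneg (a₀.1 : ℝ), abs_nonneg (a₀.2 : ℝ), hρ0.le]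
  have hup : mon c a₀ y ≤ M + 1 := by
    have hd := mon_dist_le (c := c) (ij := a₀) (x := x) (y := y)
    have := abs_le.mp hd
    nlinarith [abs_nonneg (a₀.1 : ℝ), abs_nonneg (a₀.2 : ℝ)]
  linarith

lemma exists_least {A : Set (ℤ × ℤ)} {c : ℤ × ℤ → ℝ} {x : ℝ × ℝ} {r : ℝ} (hr : 0 < r)
    (h0 : ∀ ij ∈ A, ∀ y ∈ Metric.closedBall x r, 0 ≤ mon c ij y)
    {a₀ : ℤ × ℤ} (ha₀ : a₀ ∈ A) :
    ∃ m, IsLeast ((fun ij => mon c ij x) '' A) m := by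
  obtain ⟨ρ, T, hρ0, hρr, hTsub, ha₀T, htail⟩ := tail_bound hr h0 ha₀
  obtain ⟨b, hbT, hbmin⟩ := T.exists_min_image (fun ij => mon c ij x) ⟨a₀, ha₀T⟩
  refine ⟨mon c b x, ⟨b, hTsub hbT, rfl⟩, ?_⟩
  rintro _ ⟨ij, hijA, rfl⟩
  by_cases hT : ij ∈ T
  · exact hbmin ij hT
  · have := htail x (Metric.mem_ball_self hρ0) ij hijA hT
    have := hbmin a₀ ha₀T
    simp only at *
    linarith

lemma eventually_eq_of_unique_active {A : Set (ℤ × ℤ)} {c : ℤ × ℤ → ℝ} {x : ℝ × ℝ}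
    {r : ℝ} {f : ℝ × ℝ → ℝ} (hr : 0 < r)
    (h0 : ∀ ij ∈ A, ∀ y ∈ Metric.closedBall x r, 0 ≤ mon c ij y)
    (hloc : ∀ y ∈ Metric.ball x r, IsLeast ((fun ij => mon c ij y) '' A) (f y))
    {a₀ : ℤ × ℤ} (ha₀ : a₀ ∈ A)
    (hstrict : ∀ ij ∈ A, ij ≠ a₀ → mon c a₀ x < mon c ij x) :
    f =ᶠ[nhds x] mon c a₀ := by
  obtain ⟨ρ, T, hρ0, hρr, hTsub, ha₀T, htail⟩ := tail_bound hr h0 ha₀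
  have hVopen : IsOpen (⋂ ij ∈ T.erase a₀, {y : ℝ × ℝ | mon c a₀ y < mon c ij y}) := by
    apply isOpen_biInter_finset
    intro ij _
    exact isOpen_lt (mon_continuous c a₀) (mon_continuous c ij)
  have hxV : x ∈ ⋂ ij ∈ T.erase a₀, {y : ℝ × ℝ | mon c a₀ y < mon c ij y} := by
    simp only [Set.mem_iInter]
    intro ij hij
    exact hstrict ij (hTsub (Finset.mem_of_mem_erase hij)) (Finset.ne_of_mem_erase hij)
  filter_upwards [hVopen.mem_nhds hxV, Metric.ball_mem_nhds x hρ0] with y hyV hyball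
  have hleast := hloc y (Metric.ball_subset_ball hρr hyball)
  obtain ⟨ij, hijA, hije⟩ := hleast.1
  have hfle : f y ≤ mon c a₀ y := hleast.2 ⟨a₀, ha₀, rfl⟩
  by_cases hT : ij ∈ T
  · rcases eq_or_ne ij a₀ with rfl | hne
    · exact le_antisymm hfle (by rw [← hije])
    · exfalso
      simp only [Set.mem_iInter] at hyV
      have := hyV ij (Finset.mem_erase.mpr ⟨hne, hT⟩)
      simp only [Set.mem_setOf_eq] at this
      have hije' : mon c ij y = f y := hije
      linarith
  · exfalso
    have := htail y hyball ij hijA hT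
    have hije' : mon c ij y = f y := hije
    linarith


def Competes (Ω P : Set (ℝ × ℝ)) (g : ℝ × ℝ → ℝ) : Prop :=
  IsOmegaTropical Ω g ∧ (∀ q ∈ Ω, 0 ≤ g q) ∧ P ⊆ cornerLocus Ω g

def VSet (Ω P : Set (ℝ × ℝ)) (x : ℝ × ℝ) : Set ℝ := {y | ∃ g, Competes Ω P g ∧ y = g x}

lemma GP_zero_eq (Ω P : Set (ℝ × ℝ)) (x : ℝ × ℝ) :
    GP Ω P zeroFn x = sInf (VSet Ω P x) := by
  simp only [GP, VSet, Competes, zeroFn, and_assoc]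

lemma VSet_nonneg {Ω P : Set (ℝ × ℝ)} {x : ℝ × ℝ} (hx : x ∈ Ω) :
    ∀ y ∈ VSet Ω P x, 0 ≤ y := by
  rintro _ ⟨g, hg, rfl⟩
  exact hg.2.1 x hx

lemma bddBelow_VSet {Ω P : Set (ℝ × ℝ)} {x : ℝ × ℝ} (hx : x ∈ Ω) :
    BddBelow (VSet Ω P x) := ⟨0, fun y hy => VSet_nonneg hx y hy⟩

lemma GP_le {Ω P : Set (ℝ × ℝ)} {x : ℝ × ℝ} {g : ℝ × ℝ → ℝ} (hx : x ∈ Ω)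
    (hg : Competes Ω P g) : GP Ω P zeroFn x ≤ g x := by
  rw [GP_zero_eq]
  exact csInf_le (bddBelow_VSet hx) ⟨g, hg, rfl⟩

lemma le_GP {Ω P : Set (ℝ × ℝ)} {x : ℝ × ℝ} {m : ℝ}
    (hG : ∃ g, Competes Ω P g) (h : ∀ g, Competes Ω P g → m ≤ g x) :
    m ≤ GP Ω P zeroFn x := by
  obtain ⟨g, hg⟩ := hG
  rw [GP_zero_eq]
  exact le_csInf ⟨g x, g, hg, rfl⟩ (by rintro _ ⟨g', hg', rfl⟩; exact h g' hg')

/-- The set of all coefficients of index `ij` appearing in some competitor. -/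
def SIJ (Ω P : Set (ℝ × ℝ)) (ij : ℤ × ℤ) : Set ℝ :=
  {t | ∃ g A c, Competes Ω P g ∧ IsTropSeriesWith Ω A c g ∧ ij ∈ A ∧ t = c ij}

def Ahat (Ω P : Set (ℝ × ℝ)) : Set (ℤ × ℤ) := {ij | (SIJ Ω P ij).Nonempty}

noncomputable def chat (Ω P : Set (ℝ × ℝ)) : ℤ × ℤ → ℝ := fun ij => sInf (SIJ Ω P ij)

lemma sij_lb {Ω P : Set (ℝ × ℝ)} {x : ℝ × ℝ} (hx : x ∈ interior Ω) (ij : ℤ × ℤ) :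
    ∀ t ∈ SIJ Ω P ij, -((ij.1 : ℝ) * x.1 + (ij.2 : ℝ) * x.2) ≤ t := by
  rintro _ ⟨g, A, c, hg, htrop, hijA, rfl⟩
  have h1 := (htrop.2.2.2 x hx).2 ⟨ij, hijA, rfl⟩
  have h2 := htrop.2.1 x (interior_subset hx)
  simp only [mon] at h1
  linarith

lemma chat_le {Ω P : Set (ℝ × ℝ)} {g : ℝ × ℝ → ℝ} {A : Set (ℤ × ℤ)} {c : ℤ × ℤ → ℝ}
    {ij : ℤ × ℤ} (hne : (interior Ω).Nonempty) (hg : Competes Ω P g)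
    (htrop : IsTropSeriesWith Ω A c g) (hij : ij ∈ A) : chat Ω P ij ≤ c ij := by
  obtain ⟨x, hx⟩ := hne
  exact csInf_le ⟨_, sij_lb hx ij⟩ ⟨g, A, c, hg, htrop, hij, rfl⟩

lemma subset_Ahat {Ω P : Set (ℝ × ℝ)} {g : ℝ × ℝ → ℝ} {A : Set (ℤ × ℤ)} {c : ℤ × ℤ → ℝ}
    (hg : Competes Ω P g) (htrop : IsTropSeriesWith Ω A c g) : A ⊆ Ahat Ω P :=
  fun ij hij => ⟨c ij, g, A, c, hg, htrop, hij, rfl⟩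

lemma Ahat_nonempty {Ω P : Set (ℝ × ℝ)} (hG : ∃ g, Competes Ω P g) :
    (Ahat Ω P).Nonempty := by
  obtain ⟨g, hg⟩ := hG
  obtain ⟨A, c, htrop⟩ := hg.1
  obtain ⟨a, ha⟩ := htrop.1
  exact ⟨a, subset_Ahat hg htrop ha⟩

lemma chat_mon_nonneg {Ω P : Set (ℝ × ℝ)} {x : ℝ × ℝ} (hx : x ∈ interior Ω)
    {ij : ℤ × ℤ} (hij : ij ∈ Ahat Ω P) : 0 ≤ mon (chat Ω P) ij x := by
  have : -((ij.1 : ℝ) * x.1 + (ij.2 : ℝ) * x.2) ≤ chat Ω P ij :=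
    le_csInf hij (sij_lb hx ij)
  simp only [mon]
  linarith

lemma mon_chat_le {Ω P : Set (ℝ × ℝ)} {g : ℝ × ℝ → ℝ} {A : Set (ℤ × ℤ)} {c : ℤ × ℤ → ℝ}
    {ij : ℤ × ℤ} (hne : (interior Ω).Nonempty) (hg : Competes Ω P g)
    (htrop : IsTropSeriesWith Ω A c g) (hij : ij ∈ A) (x : ℝ × ℝ) :
    mon (chat Ω P) ij x ≤ mon c ij x := by
  have := chat_le hne hg htrop hij
  simp only [mon]; linarith

noncomputable def Fhat (Ω P : Set (ℝ × ℝ)) (x : ℝ × ℝ) : ℝ :=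
  sInf ((fun ij => mon (chat Ω P) ij x) '' Ahat Ω P)

lemma interior_ball {Ω : Set (ℝ × ℝ)} {x : ℝ × ℝ} (hx : x ∈ interior Ω) :
    ∃ r > 0, Metric.closedBall x r ⊆ interior Ω := by
  obtain ⟨ε, hε, hball⟩ := Metric.isOpen_iff.mp isOpen_interior x hx
  exact ⟨ε / 2, by positivity, (Metric.closedBall_subset_ball (by linarith)).trans hball⟩

lemma Fhat_isLeast {Ω P : Set (ℝ × ℝ)} {x : ℝ × ℝ} (hG : ∃ g, Competes Ω P g)
    (hx : x ∈ interior Ω) :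
    IsLeast ((fun ij => mon (chat Ω P) ij x) '' Ahat Ω P) (Fhat Ω P x) := by
  obtain ⟨r, hr, hsub⟩ := interior_ball hx
  obtain ⟨a₀, ha₀⟩ := Ahat_nonempty hG
  obtain ⟨m, hm⟩ := exists_least hr (fun ij hij y hy => chat_mon_nonneg (hsub hy) hij) ha₀
  rw [Fhat, hm.csInf_eq]
  exact hm

lemma Fhat_le {Ω P : Set (ℝ × ℝ)} {x : ℝ × ℝ} {ij : ℤ × ℤ} (hG : ∃ g, Competes Ω P g)
    (hx : x ∈ interior Ω) (hij : ij ∈ Ahat Ω P) :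
    Fhat Ω P x ≤ mon (chat Ω P) ij x := (Fhat_isLeast hG hx).2 ⟨ij, hij, rfl⟩

lemma Fhat_nonneg {Ω P : Set (ℝ × ℝ)} {x : ℝ × ℝ} (hG : ∃ g, Competes Ω P g)
    (hx : x ∈ interior Ω) : 0 ≤ Fhat Ω P x := by
  obtain ⟨ij, hij, hije⟩ := (Fhat_isLeast hG hx).1
  have hije' : mon (chat Ω P) ij x = Fhat Ω P x := hije
  linarith [chat_mon_nonneg hx hij]

lemma GP_eq_Fhat {Ω P : Set (ℝ × ℝ)} {x : ℝ × ℝ} (hG : ∃ g, Competes Ω P g)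
    (hx : x ∈ interior Ω) : GP Ω P zeroFn x = Fhat Ω P x := by
  apply le_antisymm
  · by_contra hlt
    push_neg at hlt
    obtain ⟨ij', hij', hije⟩ := (Fhat_isLeast hG hx).1
    have hije' : mon (chat Ω P) ij' x = Fhat Ω P x := hije
    set ε := GP Ω P zeroFn x - Fhat Ω P x with hεdef
    have hε0 : 0 < ε := by linarith
    have hslt : sInf (SIJ Ω P ij') < chat Ω P ij' + ε := by
      have : chat Ω P ij' = sInf (SIJ Ω P ij') := rfl
      linarith
    obtain ⟨t, htS, htlt⟩ := exists_lt_of_csInf_lt hij' hslt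
    obtain ⟨g, A, c, hg, htrop, hijA, rfl⟩ := htS
    have h1 : g x ≤ mon c ij' x := (htrop.2.2.2 x hx).2 ⟨ij', hijA, rfl⟩
    have h2 : mon c ij' x < mon (chat Ω P) ij' x + ε := by simp only [mon]; linarith
    have h3 := GP_le (interior_subset hx) hg
    linarith
  · apply le_GP hG
    intro g hg
    obtain ⟨A, c, htrop⟩ := hg.1
    obtain ⟨ijs, hijs, hije⟩ := (htrop.2.2.2 x hx).1
    have hije' : mon c ijs x = g x := hije
    have h1 := mon_chat_le ⟨x, hx⟩ hg htrop hijs x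
    have h2 := Fhat_le hG hx (subset_Ahat hg htrop hijs)
    linarith

lemma GP_eventually_Fhat {Ω P : Set (ℝ × ℝ)} {x : ℝ × ℝ} (hG : ∃ g, Competes Ω P g)
    (hx : x ∈ interior Ω) : GP Ω P zeroFn =ᶠ[nhds x] Fhat Ω P := by
  filter_upwards [isOpen_interior.mem_nhds hx] with y hy
  exact GP_eq_Fhat hG hy

lemma chat_ball_nonneg {Ω P : Set (ℝ × ℝ)} {x : ℝ × ℝ} {r : ℝ}
    (hsub : Metric.closedBall x r ⊆ interior Ω) :
    ∀ ij ∈ Ahat Ω P, ∀ y ∈ Metric.closedBall x r, 0 ≤ mon (chat Ω P) ij y :=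
  fun ij hij y hy => chat_mon_nonneg (hsub hy) hij

lemma two_active_nondiff {Ω P : Set (ℝ × ℝ)} {x : ℝ × ℝ} (hG : ∃ g, Competes Ω P g)
    (hx : x ∈ interior Ω) {a b : ℤ × ℤ} (ha : a ∈ Ahat Ω P) (hb : b ∈ Ahat Ω P)
    (hab : a ≠ b) (hea : mon (chat Ω P) a x = Fhat Ω P x)
    (heb : mon (chat Ω P) b x = Fhat Ω P x) :
    ¬ DifferentiableAt ℝ (Fhat Ω P) x := by
  apply not_differentiable_of_two_active hab ?_ ?_ hea.symm heb.symm
  · filter_upwards [isOpen_interior.mem_nhds hx] with y hy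
    exact Fhat_le hG hy ha
  · filter_upwards [isOpen_interior.mem_nhds hx] with y hy
    exact Fhat_le hG hy hb

lemma unique_active_eventually {Ω P : Set (ℝ × ℝ)} {x : ℝ × ℝ} (hG : ∃ g, Competes Ω P g)
    (hx : x ∈ interior Ω) {a₀ : ℤ × ℤ} (ha₀ : a₀ ∈ Ahat Ω P)
    (hstrict : ∀ ij ∈ Ahat Ω P, ij ≠ a₀ → mon (chat Ω P) a₀ x < mon (chat Ω P) ij x) :
    Fhat Ω P =ᶠ[nhds x] mon (chat Ω P) a₀ := by
  obtain ⟨r, hr, hsub⟩ := interior_ball hx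
  exact eventually_eq_of_unique_active hr (chat_ball_nonneg hsub)
    (fun y hy => Fhat_isLeast hG (hsub (Metric.ball_subset_closedBall hy))) ha₀ hstrict

lemma active_dichotomy {Ω P : Set (ℝ × ℝ)} {x : ℝ × ℝ} (hG : ∃ g, Competes Ω P g)
    (hx : x ∈ interior Ω) (hdiff : DifferentiableAt ℝ (Fhat Ω P) x) :
    ∃ a₀ ∈ Ahat Ω P, mon (chat Ω P) a₀ x = Fhat Ω P x ∧
      ∀ ij ∈ Ahat Ω P, ij ≠ a₀ → mon (chat Ω P) a₀ x < mon (chat Ω P) ij x := by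
  obtain ⟨a₀, ha₀, hea⟩ := (Fhat_isLeast hG hx).1
  have hea' : mon (chat Ω P) a₀ x = Fhat Ω P x := hea
  refine ⟨a₀, ha₀, hea', fun ij hij hne => ?_⟩
  rcases lt_or_ge (mon (chat Ω P) a₀ x) (mon (chat Ω P) ij x) with h | h
  · exact h
  · exfalso
    have hle := Fhat_le hG hx hij
    have heb : mon (chat Ω P) ij x = Fhat Ω P x := le_antisymm (by linarith) hle.ge.le
    exact two_active_nondiff hG hx hij ha₀ hne heb hea' hdiff

/-- the positive gap at a point with a unique active monomial -/
lemma gap_pos {Ω P : Set (ℝ × ℝ)} {q : ℝ × ℝ} (hG : ∃ g, Competes Ω P g)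
    (hq : q ∈ interior Ω) {a₀ : ℤ × ℤ} (ha₀ : a₀ ∈ Ahat Ω P)
    (hea : mon (chat Ω P) a₀ q = Fhat Ω P q)
    (hstrict : ∀ ij ∈ Ahat Ω P, ij ≠ a₀ → mon (chat Ω P) a₀ q < mon (chat Ω P) ij q) :
    ∃ γ > 0, γ ≤ 1 ∧ ∀ ij ∈ Ahat Ω P, ij ≠ a₀ → Fhat Ω P q + γ ≤ mon (chat Ω P) ij q := by
  obtain ⟨r, hr, hsub⟩ := interior_ball hq
  obtain ⟨ρ, T, hρ0, hρr, hTsub, ha₀T, htail⟩ := tail_bound hr (chat_ball_nonneg hsub) ha₀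
  set φ : ℤ × ℤ → ℝ := fun ij => if ij = a₀ then 1 else mon (chat Ω P) ij q - Fhat Ω P q
    with hφdef
  set γ := min 1 (T.inf' ⟨a₀, ha₀T⟩ φ) with hγdef
  have hφpos : ∀ ij ∈ T, 0 < φ ij := by
    intro ij hijT
    rw [hφdef]
    by_cases h : ij = a₀
    · simp [h]
    · simp only [h, if_false]
      have := hstrict ij (hTsub hijT) h
      linarith
  have hγ0 : 0 < γ := by
    apply lt_min one_pos
    obtain ⟨b, hbT, hbe⟩ := T.exists_mem_eq_inf' ⟨a₀, ha₀T⟩ φ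
    rw [hbe]
    exact hφpos b hbT
  refine ⟨γ, hγ0, min_le_left _ _, fun ij hij hne => ?_⟩
  by_cases hT : ij ∈ T
  · have h1 : γ ≤ φ ij := le_trans (min_le_right _ _) (Finset.inf'_le φ hT)
    rw [hφdef] at h1
    simp only [hne, if_false] at h1
    linarith
  · have := htail q (Metric.mem_ball_self hρ0) ij hij hT
    have hγ1 : γ ≤ 1 := min_le_left _ _
    linarith

/-- every point of `P` in the interior is a nonsmooth point of `Fhat`. -/
lemma Fhat_nondiff_at_P {Ω P : Set (ℝ × ℝ)} (hG : ∃ g, Competes Ω P g) {q : ℝ × ℝ}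
    (hq : q ∈ interior Ω) (hqP : q ∈ P) : ¬ DifferentiableAt ℝ (Fhat Ω P) q := by
  intro hdiff
  obtain ⟨a₀, ha₀, hea, hstrict⟩ := active_dichotomy hG hq hdiff
  obtain ⟨γ, hγ0, hγ1, hgap⟩ := gap_pos hG hq ha₀ hea hstrict
  -- a competitor with value close to the infimum at q
  have hlt : sInf (VSet Ω P q) < Fhat Ω P q + γ / 2 := by
    rw [← GP_zero_eq, GP_eq_Fhat hG hq]
    linarith
  have hVne : (VSet Ω P q).Nonempty := by
    obtain ⟨g, hg⟩ := hG
    exact ⟨g q, g, hg, rfl⟩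
  obtain ⟨v, ⟨g, hg, rfl⟩, hvlt⟩ := exists_lt_of_csInf_lt hVne hlt
  obtain ⟨A, c, htrop⟩ := hg.1
  obtain ⟨r, hr, hsub⟩ := interior_ball hq
  have h0g : ∀ ij ∈ A, ∀ y ∈ Metric.closedBall q r, 0 ≤ mon c ij y := fun ij hij y hy =>
    le_trans (htrop.2.1 y (interior_subset (hsub hy))) ((htrop.2.2.2 y (hsub hy)).2 ⟨ij, hij, rfl⟩)
  obtain ⟨ijs, hijs, hije⟩ := (htrop.2.2.2 q hq).1
  have hije' : mon c ijs q = g q := hije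
  have hijsa : ijs = a₀ := by
    by_contra hne
    have h1 := mon_chat_le ⟨q, hq⟩ hg htrop hijs q
    have h2 := hgap ijs (subset_Ahat hg htrop hijs) hne
    linarith
  have hstrict_g : ∀ ij ∈ A, ij ≠ a₀ → mon c a₀ q < mon c ij q := by
    intro ij hij hne
    have h1 := mon_chat_le ⟨q, hq⟩ hg htrop hij q
    have h2 := hgap ij (subset_Ahat hg htrop hij) hne
    rw [hijsa] at hije'
    linarith
  have hev := eventually_eq_of_unique_active hr h0g
    (fun y hy => htrop.2.2.2 y (hsub (Metric.ball_subset_closedBall hy)))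
    (hijsa ▸ hijs) hstrict_g
  have hgdiff : DifferentiableAt ℝ g q :=
    (hev.differentiableAt_iff).mpr ((mon_differentiable c a₀) q)
  exact (hg.2.2 hqP).2 hgdiff

lemma mon_combo (c : ℤ × ℤ → ℝ) (ij : ℤ × ℤ) (t : ℝ) (p z : ℝ × ℝ) :
    mon c ij (t • p + (1 - t) • z) = t * mon c ij p + (1 - t) * mon c ij z := by
  simp only [mon, Prod.fst_add, Prod.snd_add, Prod.smul_fst, Prod.smul_snd, smul_eq_mul]
  ring

lemma mem_closure_of_segment {O : Set (ℝ × ℝ)} {p z : ℝ × ℝ}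
    (h : ∀ t : ℝ, 0 < t → t ≤ 1 → t • p + (1 - t) • z ∈ O) : z ∈ closure O := by
  have hf : Filter.Tendsto (fun n : ℕ => 1 / ((n : ℝ) + 1)) Filter.atTop (nhds 0) :=
    tendsto_one_div_add_atTop_nhds_zero_nat
  have hten : Filter.Tendsto
      (fun n : ℕ => (1 / ((n : ℝ) + 1)) • p + (1 - 1 / ((n : ℝ) + 1)) • z)
      Filter.atTop (nhds z) := by
    have h1 : Filter.Tendsto (fun n : ℕ => (1 / ((n : ℝ) + 1)) • p) Filter.atTop
        (nhds ((0 : ℝ) • p)) := hf.smul_const p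
    have h2 : Filter.Tendsto (fun n : ℕ => (1 - 1 / ((n : ℝ) + 1)) • z) Filter.atTop
        (nhds (((1 : ℝ) - 0) • z)) := ((tendsto_const_nhds.sub hf).smul_const z)
    have := h1.add h2
    simpa using this
  apply mem_closure_of_tendsto hten
  filter_upwards with n
  have hn0 : (0 : ℝ) < 1 / ((n : ℝ) + 1) := by positivity
  have hn1 : 1 / ((n : ℝ) + 1) ≤ 1 := by
    rw [div_le_one (by positivity)]; linarith [Nat.cast_nonneg (α := ℝ) n]
  exact h (1 / ((n : ℝ) + 1)) hn0 hn1

lemma frontier_nonempty_of_compact {Ω : Set (ℝ × ℝ)} (hcomp : IsCompact Ω)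
    (hne : Ω.Nonempty) : (frontier Ω).Nonempty := by
  by_contra h
  rw [Set.not_nonempty_iff_eq_empty] at h
  rcases isClopen_iff.mp (isClopen_iff_frontier_eq_empty.mpr h) with h1 | h1
  · exact hne.ne_empty h1
  · exact hcomp.ne_univ h1

lemma mem_closure_interior {Ω : Set (ℝ × ℝ)} (hconv : Convex ℝ Ω) {p z : ℝ × ℝ}
    (hp : p ∈ interior Ω) (hz : z ∈ closure Ω) : z ∈ closure (interior Ω) := by
  apply mem_closure_of_segment
  intro t ht0 ht1
  exact hconv.combo_interior_closure_mem_interior hp hz ht0 (by linarith) (by ring)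

lemma no_bounded_component_of_smooth {Ω : Set (ℝ × ℝ)} (hconv : Convex ℝ Ω)
    (hcomp : IsCompact Ω) {f : ℝ × ℝ → ℝ} {p : ℝ × ℝ} (hp : p ∈ interior Ω)
    (hsm : ∀ x ∈ interior Ω, DifferentiableAt ℝ f x)
    (hU : closure (connectedComponentIn (interior Ω \ cornerLocus Ω f) p) ∩ frontier Ω = ∅) :
    False := by
  have hC : interior Ω \ cornerLocus Ω f = interior Ω := by
    ext x
    simp only [Set.mem_diff, cornerLocus, Set.mem_setOf_eq, Set.mem_sep_iff]
    constructor
    · exact fun h => h.1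
    · exact fun h => ⟨h, fun h2 => h2.2 (hsm x h)⟩
  rw [hC] at hU
  have hUeq : connectedComponentIn (interior Ω) p = interior Ω :=
    subset_antisymm (connectedComponentIn_subset _ _)
      ((hconv.interior.isPreconnected).subset_connectedComponentIn hp subset_rfl)
  rw [hUeq] at hU
  obtain ⟨z, hz⟩ := frontier_nonempty_of_compact hcomp ⟨p, interior_subset hp⟩
  have hzc : z ∈ closure (interior Ω) :=
    mem_closure_interior hconv hp (subset_closure (hcomp.isClosed.frontier_subset hz))
  exact absurd hU (Set.Nonempty.ne_empty ⟨z, hzc, hz⟩)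

lemma trop_mon_nonneg {Ω : Set (ℝ × ℝ)} {g : ℝ × ℝ → ℝ} {A : Set (ℤ × ℤ)}
    {c : ℤ × ℤ → ℝ} (htrop : IsTropSeriesWith Ω A c g) :
    ∀ ij ∈ A, ∀ y ∈ interior Ω, 0 ≤ mon c ij y := fun ij hij y hy =>
  le_trans (htrop.2.1 y (interior_subset hy)) ((htrop.2.2.2 y hy).2 ⟨ij, hij, rfl⟩)

lemma competitor_value_lb {Ω P : Set (ℝ × ℝ)} {g : ℝ × ℝ → ℝ} (hg : Competes Ω P g)
    {q₀ x : ℝ × ℝ} {r₀ r : ℝ} (hq₀P : q₀ ∈ P) (hr₀ : 0 < r₀) (hr : 0 < r)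
    (hq₀sub : Metric.closedBall q₀ r₀ ⊆ interior Ω)
    (hxsub : Metric.closedBall x r ⊆ interior Ω) :
    min r₀ r ≤ g x := by
  have hq₀ : q₀ ∈ interior Ω := hq₀sub (Metric.mem_closedBall_self hr₀.le)
  have hx : x ∈ interior Ω := hxsub (Metric.mem_closedBall_self hr.le)
  obtain ⟨A, c, htrop⟩ := hg.1
  have h0 := trop_mon_nonneg htrop
  obtain ⟨ij₁, hij₁A, hije1⟩ := (htrop.2.2.2 q₀ hq₀).1
  have hije1' : mon c ij₁ q₀ = g q₀ := hije1
  have hnotuniq : ¬ (∀ ij ∈ A, ij ≠ ij₁ → mon c ij₁ q₀ < mon c ij q₀) := by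
    intro hstrict
    apply (hg.2.2 hq₀P).2
    have hev := eventually_eq_of_unique_active hr₀
      (fun ij hij y hy => h0 ij hij y (hq₀sub hy))
      (fun y hy => htrop.2.2.2 y (hq₀sub (Metric.ball_subset_closedBall hy))) hij₁A hstrict
    exact (hev.differentiableAt_iff).mpr ((mon_differentiable c ij₁) q₀)
  push_neg at hnotuniq
  obtain ⟨ij₂, hij₂A, hij₂ne, hij₂le⟩ := hnotuniq
  have hije2 : mon c ij₂ q₀ = g q₀ :=
    le_antisymm (by linarith) ((htrop.2.2.2 q₀ hq₀).2 ⟨ij₂, hij₂A, rfl⟩)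
  have hb : ∃ b ∈ A, b ≠ ((0 : ℤ), (0 : ℤ)) ∧ mon c b q₀ = g q₀ := by
    by_cases h : ij₁ = ((0 : ℤ), (0 : ℤ))
    · exact ⟨ij₂, hij₂A, fun hc => hij₂ne (hc.trans h.symm), hije2⟩
    · exact ⟨ij₁, hij₁A, h, hije1'⟩
  obtain ⟨b, hbA, hb0, hbe⟩ := hb
  have hco := mon_coercive hr₀.le (fun y hy => h0 b hbA y (hq₀sub hy))
  have hb1 : (1 : ℝ) ≤ |(b.1 : ℝ)| ∨ (1 : ℝ) ≤ |(b.2 : ℝ)| := by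
    rcases Prod.mk.injEq .. ▸ (fun h => hb0 (Prod.ext h.1 h.2) : ¬(b.1 = 0 ∧ b.2 = 0)) with _
    by_cases h1 : b.1 = 0
    · right
      have h2 : b.2 ≠ 0 := fun h2 => hb0 (Prod.ext h1 h2)
      exact_mod_cast (by exact_mod_cast Int.one_le_abs h2 : (1 : ℝ) ≤ |(b.2 : ℝ)|)
    · left
      exact_mod_cast (by exact_mod_cast Int.one_le_abs h1 : (1 : ℝ) ≤ |(b.1 : ℝ)|)
  have hgq₀ : r₀ ≤ g q₀ := by
    rcases hb1 with h | h
    · nlinarith [hco.1]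
    · nlinarith [hco.2]
  obtain ⟨ijs, hijsA, hijes⟩ := (htrop.2.2.2 x hx).1
  have hijes' : mon c ijs x = g x := hijes
  by_cases hs : ijs = ((0 : ℤ), (0 : ℤ))
  · have h1 : g q₀ ≤ mon c ijs q₀ := (htrop.2.2.2 q₀ hq₀).2 ⟨ijs, hijsA, rfl⟩
    have h2 : mon c ijs q₀ = mon c ijs x := by rw [hs]; simp [mon]
    calc min r₀ r ≤ r₀ := min_le_left _ _
      _ ≤ g q₀ := hgq₀
      _ ≤ mon c ijs x := by linarith
      _ = g x := hijes'
  · have hco2 := mon_coercive hr.le (fun y hy => h0 ijs hijsA y (hxsub hy))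
    have hs1 : (1 : ℝ) ≤ |(ijs.1 : ℝ)| ∨ (1 : ℝ) ≤ |(ijs.2 : ℝ)| := by
      by_cases h1 : ijs.1 = 0
      · right
        have h2 : ijs.2 ≠ 0 := fun h2 => hs (Prod.ext h1 h2)
        exact_mod_cast (by exact_mod_cast Int.one_le_abs h2 : (1 : ℝ) ≤ |(ijs.2 : ℝ)|)
      · left
        exact_mod_cast (by exact_mod_cast Int.one_le_abs h1 : (1 : ℝ) ≤ |(ijs.1 : ℝ)|)
    have : r ≤ g x := by
      rcases hs1 with h | h
      · nlinarith [hco2.1]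
      · nlinarith [hco2.2]
    exact (min_le_right _ _).trans this

lemma GP_pos {Ω P : Set (ℝ × ℝ)} (hG : ∃ g, Competes Ω P g) {q₀ x : ℝ × ℝ}
    (hq₀P : q₀ ∈ P) (hq₀ : q₀ ∈ interior Ω) (hx : x ∈ interior Ω) :
    0 < GP Ω P zeroFn x := by
  obtain ⟨r₀, hr₀, hq₀sub⟩ := interior_ball hq₀
  obtain ⟨r, hr, hxsub⟩ := interior_ball hx
  have : (0 : ℝ) < min r₀ r := lt_min hr₀ hr
  exact lt_of_lt_of_le this (le_GP hG (fun g hg =>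
    competitor_value_lb hg hq₀P hr₀ hr hq₀sub hxsub))

lemma GP_of_no_competitor {Ω P : Set (ℝ × ℝ)} (h : ¬ ∃ g, Competes Ω P g) :
    GP Ω P zeroFn = fun _ => 0 := by
  funext x
  rw [GP_zero_eq]
  have hV : VSet Ω P x = ∅ := by
    rw [Set.eq_empty_iff_forall_notMem]
    rintro y ⟨g, hg, rfl⟩
    exact h ⟨g, hg⟩
  rw [hV, Real.sInf_empty]

lemma competes_const {Ω P : Set (ℝ × ℝ)} (hPe : P = ∅) {ε : ℝ} (hε : 0 ≤ ε) :
    Competes Ω P ((interior Ω).indicator fun _ => ε) := by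
  refine ⟨⟨{((0 : ℤ), (0 : ℤ))}, fun _ => ε, Set.singleton_nonempty _, ?_, ?_, ?_⟩, ?_, ?_⟩
  · intro y _
    by_cases h : y ∈ interior Ω
    · rw [Set.indicator_of_mem h]; exact hε
    · rw [Set.indicator_of_notMem h]
  · intro y hy
    exact Set.indicator_of_notMem (fun hc => hy.2 hc) _
  · intro y hy
    rw [Set.image_singleton]
    have h1 : mon (fun _ => ε) ((0 : ℤ), (0 : ℤ)) y = ε := by simp [mon]
    rw [h1, Set.indicator_of_mem hy]
    exact isLeast_singleton
  · intro y _
    by_cases h : y ∈ interior Ω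
    · rw [Set.indicator_of_mem h]; exact hε
    · rw [Set.indicator_of_notMem h]
  · rw [hPe]
    exact Set.empty_subset _

lemma GP_zero_on_interior_of_P_empty {Ω P : Set (ℝ × ℝ)} (hPe : P = ∅) :
    ∀ x ∈ interior Ω, GP Ω P zeroFn x = 0 := by
  intro x hx
  have hG : ∃ g, Competes Ω P g := ⟨_, competes_const hPe le_rfl⟩
  have h0 : 0 ≤ GP Ω P zeroFn x :=
    le_GP hG (fun g hg => hg.2.1 x (interior_subset hx))
  have hub : ∀ ε > 0, GP Ω P zeroFn x ≤ ε := by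
    intro ε hε
    have := GP_le (interior_subset hx) (competes_const hPe hε.le)
    rwa [Set.indicator_of_mem hx] at this
  by_contra hne
  have hpos : 0 < GP Ω P zeroFn x := lt_of_le_of_ne h0 (Ne.symm hne)
  linarith [hub (GP Ω P zeroFn x / 2) (by linarith)]

lemma mon_add_const (c : ℤ × ℤ → ℝ) (δ : ℝ) (ij : ℤ × ℤ) (y : ℝ × ℝ) :
    mon (fun kl => c kl + δ) ij y = mon c ij y + δ := by
  simp [mon]; ring

lemma main_case {Ω : Set (ℝ × ℝ)} (hconv : Convex ℝ Ω) (hcomp : IsCompact Ω)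
    {P : Set (ℝ × ℝ)} (hPsub : P ⊆ interior Ω) (hPfin : P.Finite)
    (hG : ∃ g, Competes Ω P g) {q₀ : ℝ × ℝ} (hq₀ : q₀ ∈ P) {p : ℝ × ℝ}
    (hp : p ∈ interior Ω \ cornerLocus Ω (GP Ω P zeroFn))
    (hU : closure (connectedComponentIn
      (interior Ω \ cornerLocus Ω (GP Ω P zeroFn)) p) ∩ frontier Ω = ∅)
    (hcon : ∀ q ∈ P, q ∉ closure (connectedComponentIn
      (interior Ω \ cornerLocus Ω (GP Ω P zeroFn)) p)) :
    False := by
  have hpint : p ∈ interior Ω := hp.1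
  have hpdiffF : DifferentiableAt ℝ (GP Ω P zeroFn) p := by
    by_contra h
    exact hp.2 ⟨hpint, h⟩
  have hpdiff : DifferentiableAt ℝ (Fhat Ω P) p :=
    (GP_eventually_Fhat hG hpint).differentiableAt_iff.mp hpdiffF
  obtain ⟨a₀, ha₀, hea, hstrict⟩ := active_dichotomy hG hpint hpdiff
  set O := {y ∈ interior Ω |
    ∀ ij ∈ Ahat Ω P, ij ≠ a₀ → mon (chat Ω P) a₀ y < mon (chat Ω P) ij y} with hOdef
  have hpO : p ∈ O := ⟨hpint, hstrict⟩
  have hOconv : Convex ℝ O := by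
    intro y hy z hz a b ha hb hab
    constructor
    · exact hconv.interior hy.1 hz.1 ha hb hab
    · intro ij hij hne
      have hy' := hy.2 ij hij hne
      have hz' := hz.2 ij hij hne
      have hb1 : b = 1 - a := by linarith
      subst hb1
      rw [mon_combo, mon_combo]
      rcases eq_or_lt_of_le ha with hae | hap
      · rw [← hae]; simpa using hz'
      · nlinarith
  have hOsub : O ⊆ interior Ω \ cornerLocus Ω (GP Ω P zeroFn) := by
    intro y hy
    refine ⟨hy.1, fun hc => hc.2 ?_⟩
    have hev1 := GP_eventually_Fhat hG hy.1
    have hev2 := unique_active_eventually hG hy.1 ha₀ hy.2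
    exact ((hev1.trans hev2).differentiableAt_iff).mpr ((mon_differentiable _ a₀) y)
  have hOcl : ∀ z ∈ Ω, (∀ ij ∈ Ahat Ω P, ij ≠ a₀ →
      mon (chat Ω P) a₀ z ≤ mon (chat Ω P) ij z) →
      z ∈ closure (connectedComponentIn
        (interior Ω \ cornerLocus Ω (GP Ω P zeroFn)) p) := by
    intro z hz hzR
    refine closure_mono (hOconv.isPreconnected.subset_connectedComponentIn hpO hOsub)
      (mem_closure_of_segment (p := p) ?_)
    intro t ht0 ht1
    constructor
    · exact hconv.combo_interior_closure_mem_interior hpint (subset_closure hz) ht0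
        (by linarith) (by ring)
    · intro ij hij hne
      have h1 := hstrict ij hij hne
      have h2 := hzR ij hij hne
      rw [mon_combo, mon_combo]
      nlinarith
  -- uniform lower bound δ₁
  have hδ₁ex : ∃ δ₁ > 0, ∀ y ∈ interior Ω,
      mon (chat Ω P) a₀ y - δ₁ < Fhat Ω P y → δ₁ ≤ mon (chat Ω P) a₀ y := by
    by_contra hno
    push_neg at hno
    choose u hu1 hu2 hu3 using fun n : ℕ => hno (1 / ((n : ℝ) + 1)) (by positivity)
    obtain ⟨z, hzΩ, φ, hφmono, hφtend⟩ := hcomp.tendsto_subseq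
      (fun n => interior_subset (hu1 n))
    have hseq : ∀ ij, Filter.Tendsto (fun n => mon (chat Ω P) ij (u (φ n)))
        Filter.atTop (nhds (mon (chat Ω P) ij z)) := fun ij =>
      ((mon_continuous (chat Ω P) ij).tendsto z).comp hφtend
    have hten0 : Filter.Tendsto (fun n : ℕ => 1 / ((φ n : ℝ) + 1)) Filter.atTop (nhds 0) :=
      tendsto_one_div_add_atTop_nhds_zero_nat.comp hφmono.tendsto_atTop
    have hm₀z : mon (chat Ω P) a₀ z ≤ 0 :=
      le_of_tendsto_of_tendsto' (hseq a₀) hten0 (fun n => (hu3 (φ n)).le)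
    have hzR : ∀ ij ∈ Ahat Ω P, ij ≠ a₀ →
        mon (chat Ω P) a₀ z ≤ mon (chat Ω P) ij z := by
      intro ij hij _
      have hn : ∀ n, mon (chat Ω P) a₀ (u (φ n))
          ≤ mon (chat Ω P) ij (u (φ n)) + 1 / ((φ n : ℝ) + 1) := by
        intro n
        have h1 := hu2 (φ n)
        have h2 := Fhat_le hG (hu1 (φ n)) hij
        linarith
      have := le_of_tendsto_of_tendsto' (hseq a₀) ((hseq ij).add hten0) hn
      simpa using this
    have hzcl := hOcl z hzΩ hzR
    by_cases hzint : z ∈ interior Ω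
    · have h1 := GP_pos hG hq₀ (hPsub hq₀) hzint
      rw [GP_eq_Fhat hG hzint] at h1
      have h2 := Fhat_le hG hzint ha₀
      linarith
    · have hzfr : z ∈ frontier Ω := ⟨subset_closure hzΩ, hzint⟩
      exact absurd hU (Set.Nonempty.ne_empty ⟨z, hzcl, hzfr⟩)
  obtain ⟨δ₁, hδ₁0, hδ₁⟩ := hδ₁ex
  -- gaps at the points of P
  have hγ : ∀ q ∈ P, 0 < mon (chat Ω P) a₀ q - Fhat Ω P q := by
    intro q hq
    have hqint := hPsub hq
    have hle := Fhat_le hG hqint ha₀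
    rcases eq_or_lt_of_le hle with heq | hlt
    · exfalso
      apply hcon q hq
      apply hOcl q (interior_subset hqint)
      intro ij hij _
      rw [← heq]
      exact Fhat_le hG hqint hij
    · linarith
  -- the decrement δ
  have hq₀f : q₀ ∈ hPfin.toFinset := hPfin.mem_toFinset.mpr hq₀
  set δ := min δ₁ (hPfin.toFinset.inf' ⟨q₀, hq₀f⟩
    (fun q => (mon (chat Ω P) a₀ q - Fhat Ω P q) / 2)) with hδdef
  have hδ0 : 0 < δ := by
    apply lt_min hδ₁0
    obtain ⟨b, hb, hbe⟩ := hPfin.toFinset.exists_mem_eq_inf' ⟨q₀, hq₀f⟩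
      (fun q => (mon (chat Ω P) a₀ q - Fhat Ω P q) / 2)
    rw [hbe]
    have := hγ b (hPfin.mem_toFinset.mp hb)
    linarith
  have hδδ₁ : δ ≤ δ₁ := min_le_left _ _
  have hδq : ∀ q ∈ P, 2 * δ ≤ mon (chat Ω P) a₀ q - Fhat Ω P q := by
    intro q hq
    have := (min_le_right δ₁ _).trans
      (hPfin.toFinset.inf'_le (fun q => (mon (chat Ω P) a₀ q - Fhat Ω P q) / 2)
        (hPfin.mem_toFinset.mpr hq))
    linarith
  -- the modified series
  set c' : ℤ × ℤ → ℝ := fun ij => if ij = a₀ then chat Ω P a₀ - δ else chat Ω P ij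
    with hc'def
  have hmonc' : ∀ ij y, mon c' ij y =
      if ij = a₀ then mon (chat Ω P) ij y - δ else mon (chat Ω P) ij y := by
    intro ij y
    by_cases h : ij = a₀ <;> simp [mon, hc'def, h] <;> ring
  have hc'least : ∀ y ∈ interior Ω,
      IsLeast ((fun ij => mon c' ij y) '' Ahat Ω P)
        (sInf ((fun ij => mon c' ij y) '' Ahat Ω P)) := by
    intro y hy
    obtain ⟨r, hr, hsub⟩ := interior_ball hy
    have h0 : ∀ ij ∈ Ahat Ω P, ∀ w ∈ Metric.closedBall y r,
        0 ≤ mon (fun kl => c' kl + δ) ij w := by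
      intro ij hij w hw
      have hnn := chat_mon_nonneg (hsub hw) hij
      rw [mon_add_const, hmonc']
      by_cases h : ij = a₀
      · rw [if_pos h]
        linarith
      · rw [if_neg h]
        linarith
    obtain ⟨m, hm⟩ := exists_least hr h0 ha₀
    have hshift : IsLeast ((fun ij => mon c' ij y) '' Ahat Ω P) (m - δ) := by
      constructor
      · obtain ⟨b, hb, hbe⟩ := hm.1
        have hbe' : mon (fun kl => c' kl + δ) b y = m := hbe
        have hma := mon_add_const c' δ b y
        exact ⟨b, hb, by show mon c' b y = m - δ; linarith⟩
      · rintro _ ⟨b, hb, rfl⟩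
        have h2 : m ≤ mon (fun kl => c' kl + δ) b y := hm.2 ⟨b, hb, rfl⟩
        have hma := mon_add_const c' δ b y
        show m - δ ≤ mon c' b y
        linarith
    rw [hshift.csInf_eq]
    exact hshift
  set g' : ℝ × ℝ → ℝ :=
    (interior Ω).indicator (fun y => sInf ((fun ij => mon c' ij y) '' Ahat Ω P))
    with hg'def
  have hg'int : ∀ y ∈ interior Ω,
      IsLeast ((fun ij => mon c' ij y) '' Ahat Ω P) (g' y) := by
    intro y hy
    rw [hg'def, Set.indicator_of_mem hy]
    exact hc'least y hy
  have hg'min : ∀ y ∈ interior Ω,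
      g' y = min (Fhat Ω P y) (mon (chat Ω P) a₀ y - δ) := by
    intro y hy
    apply (hg'int y hy).unique
    constructor
    · rcases le_or_gt (Fhat Ω P y) (mon (chat Ω P) a₀ y - δ) with h | h
      · obtain ⟨b, hb, hbe⟩ := (Fhat_isLeast hG hy).1
        have hbe' : mon (chat Ω P) b y = Fhat Ω P y := hbe
        have hbne : b ≠ a₀ := by
          rintro rfl
          rw [hbe'] at h
          linarith
        refine ⟨b, hb, ?_⟩
        show mon c' b y = _
        rw [hmonc', if_neg hbne, hbe', min_eq_left h]
      · refine ⟨a₀, ha₀, ?_⟩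
        show mon c' a₀ y = _
        rw [hmonc', if_pos rfl, min_eq_right h.le]
    · rintro _ ⟨b, hb, rfl⟩
      show _ ≤ mon c' b y
      rw [hmonc']
      by_cases hbne : b = a₀
      · rw [if_pos hbne, hbne]
        exact min_le_right _ _
      · rw [if_neg hbne]
        exact (min_le_left _ _).trans (Fhat_le hG hy hb)
  have hnn : ∀ y ∈ interior Ω, 0 ≤ g' y := by
    intro y hy
    rw [hg'min y hy]
    rcases lt_or_ge (mon (chat Ω P) a₀ y - δ) (Fhat Ω P y) with h | h
    · have h2 : mon (chat Ω P) a₀ y - δ₁ < Fhat Ω P y := by linarith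
      have h3 := hδ₁ y hy h2
      exact le_min (Fhat_nonneg hG hy) (by linarith)
    · exact le_min (Fhat_nonneg hG hy) ((Fhat_nonneg hG hy).trans h)
  have hg'nonneg : ∀ y ∈ Ω, 0 ≤ g' y := by
    intro y hy
    by_cases h : y ∈ interior Ω
    · exact hnn y h
    · rw [hg'def, Set.indicator_of_notMem h]
  have hg'comp : Competes Ω P g' := by
    refine ⟨⟨Ahat Ω P, c', Ahat_nonempty hG, hg'nonneg, ?_, fun y hy => hg'int y hy⟩,
      hg'nonneg, ?_⟩
    · intro y hy
      rw [hg'def]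
      exact Set.indicator_of_notMem (fun hc => hy.2 hc) _
    · intro q hq
      have hqint := hPsub hq
      refine ⟨hqint, ?_⟩
      have hFnd := Fhat_nondiff_at_P hG hqint hq
      obtain ⟨bq, hbq, hbqe⟩ := (Fhat_isLeast hG hqint).1
      have hbqe' : mon (chat Ω P) bq q = Fhat Ω P q := hbqe
      have hopen : IsOpen {y : ℝ × ℝ |
          mon (chat Ω P) bq y < mon (chat Ω P) a₀ y - δ} :=
        isOpen_lt (mon_continuous _ bq) ((mon_continuous _ a₀).sub continuous_const)
      have hqmem : q ∈ {y : ℝ × ℝ |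
          mon (chat Ω P) bq y < mon (chat Ω P) a₀ y - δ} := by
        have := hδq q hq
        simp only [Set.mem_setOf_eq]
        linarith
      have hev : g' =ᶠ[nhds q] Fhat Ω P := by
        filter_upwards [hopen.mem_nhds hqmem, isOpen_interior.mem_nhds hqint] with y h1 h2
        rw [hg'min y h2, min_eq_left]
        have := Fhat_le hG h2 hbq
        linarith
      intro hdiff
      exact hFnd (hev.differentiableAt_iff.mp hdiff)
  have h1 := GP_le (interior_subset hpint) hg'comp
  have h2 := hg'min p hpint
  have h3 : GP Ω P zeroFn p = Fhat Ω P p := GP_eq_Fhat hG hpint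
  have h4 : g' p ≤ Fhat Ω P p - δ := by
    rw [h2, ← hea]
    exact min_le_right _ _
  linarith

/-- For `f = G_P 0_Ω` with `P` a finite generic set of points of `Ω°`, every
connected component of `Ω° \ C(f)` whose closure does not meet `∂Ω` contains a
point of `P` in its closure. -/
theorem bounded_component_meets_P (Ω : Set (ℝ × ℝ)) (hconv : Convex ℝ Ω)
    (hcomp : IsCompact Ω) (P : Finset (ℝ × ℝ)) (hP : ↑P ⊆ interior Ω)
    (hgen : GenericPts Ω P) :
    ∀ p ∈ interior Ω \ cornerLocus Ω (GP Ω ↑P zeroFn),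
      closure (connectedComponentIn
          (interior Ω \ cornerLocus Ω (GP Ω ↑P zeroFn)) p) ∩ frontier Ω = ∅ →
      ∃ q ∈ (P : Set (ℝ × ℝ)), q ∈ closure (connectedComponentIn
          (interior Ω \ cornerLocus Ω (GP Ω ↑P zeroFn)) p) := by
  intro p hp hU
  by_contra hcon
  push_neg at hcon
  by_cases hG : ∃ g, Competes Ω (↑P) g
  · by_cases hPe : (↑P : Set (ℝ × ℝ)) = ∅
    · refine no_bounded_component_of_smooth hconv hcomp hp.1 ?_ hU
      intro x hx
      have hev : GP Ω (↑P) zeroFn =ᶠ[nhds x] fun _ => 0 := by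
        filter_upwards [isOpen_interior.mem_nhds hx] with y hy
        exact GP_zero_on_interior_of_P_empty hPe y hy
      exact (hev.differentiableAt_iff).mpr (differentiableAt_const 0)
    · obtain ⟨q₀, hq₀⟩ := Set.nonempty_iff_ne_empty.mpr hPe
      exact main_case hconv hcomp hP P.finite_toSet hG hq₀ hp hU hcon
  · refine no_bounded_component_of_smooth hconv hcomp hp.1 ?_ hU
    intro x hx
    rw [GP_of_no_competitor hG]
    exact differentiableAt_const 0
end

section
/- Tropical Menelaus/moment condition: for a tropical curve of degree d in ℝ², the sum over all unbounded rays of the 'moments' (cross products of the ray's primitive direction vector with a point on the ray) equals zero. -/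
open scoped Classical

/-- A plane tropical curve as a balanced weighted rectilinear graph, encoded by
half-edges `0, …, n-1`.  Each half-edge has a base vertex position, a primitive
integer direction and a positive weight.  The involution `pair` matches the two
half-edges of every bounded edge; its fixed points are the unbounded rays.
At every vertex the weighted sum of the primitive directions vanishes
(balancing condition). -/
structure TropCurveGraph (n : ℕ) where
  vpos : Fin n → ℝ × ℝ
  dir : Fin n → ℤ × ℤ
  wt : Fin n → ℕ
  primitive : ∀ h, Int.gcd (dir h).1 (dir h).2 = 1
  wt_pos : ∀ h, 0 < wt h
  pair : Fin n → Fin n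
  pair_invol : ∀ h, pair (pair h) = h
  pair_rules : ∀ h, pair h ≠ h →
    dir (pair h) = -dir h ∧ wt (pair h) = wt h ∧
    ∃ t : ℝ, 0 < t ∧
      vpos (pair h) = vpos h + t • ((((dir h).1 : ℝ)), (((dir h).2 : ℝ)))
  balanced : ∀ p : ℝ × ℝ,
    (∑ h : Fin n, if vpos h = p then (wt h : ℤ) • dir h else 0) = 0

/-- The 2D cross product of a real point with an integer vector. -/
def cross (p : ℝ × ℝ) (v : ℤ × ℤ) : ℝ := p.1 * (v.2 : ℝ) - p.2 * (v.1 : ℝ)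


/-- `cross p` as an additive hom in the integer vector. -/
def crossHom (p : ℝ × ℝ) : ℤ × ℤ →+ ℝ where
  toFun v := cross p v
  map_zero' := by simp [cross]
  map_add' a b := by simp only [cross, Prod.snd_add, Prod.fst_add]; push_cast; ring

theorem total_moment_zero {n : ℕ} (C : TropCurveGraph n) :
    (∑ h : Fin n, (C.wt h : ℝ) * cross (C.vpos h) (C.dir h)) = 0 := by
  classical
  rw [← Finset.sum_fiberwise_of_maps_to
    (g := C.vpos) (t := Finset.univ.image C.vpos)
    (fun h _ => Finset.mem_image_of_mem _ (Finset.mem_univ h))]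
  refine Finset.sum_eq_zero fun p _ => ?_
  have hb : (∑ h ∈ Finset.univ.filter (fun h => C.vpos h = p),
      (C.wt h : ℤ) • C.dir h) = 0 := by
    rw [Finset.sum_filter]; exact C.balanced p
  calc (∑ h ∈ Finset.univ.filter (fun h => C.vpos h = p),
        (C.wt h : ℝ) * cross (C.vpos h) (C.dir h))
      = ∑ h ∈ Finset.univ.filter (fun h => C.vpos h = p),
        crossHom p ((C.wt h : ℤ) • C.dir h) := by
        refine Finset.sum_congr rfl fun h hh => ?_
        have hp : C.vpos h = p := (Finset.mem_filter.mp hh).2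
        simp only [crossHom, AddMonoidHom.coe_mk, ZeroHom.coe_mk, cross,
          Prod.smul_snd, Prod.smul_fst, smul_eq_mul, hp]
        push_cast; ring
    _ = crossHom p (∑ h ∈ Finset.univ.filter (fun h => C.vpos h = p),
          (C.wt h : ℤ) • C.dir h) := (map_sum _ _ _).symm
    _ = 0 := by rw [hb]; exact map_zero _

/-- Tropical Menelaus theorem (moment condition): for a plane tropical curve,
the sum over all unbounded rays of the moments `w·(p × v)` vanishes. -/
theorem tropical_menelaus {n : ℕ} (C : TropCurveGraph n) :
    (∑ h : Fin n, if C.pair h = h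
      then (C.wt h : ℝ) * cross (C.vpos h) (C.dir h) else 0) = 0 := by
  classical
  have hS := total_moment_zero C
  have hcancel : (∑ h : Fin n, if C.pair h = h then (0:ℝ)
      else (C.wt h : ℝ) * cross (C.vpos h) (C.dir h)) = 0 := by
    refine Finset.sum_ninvolution C.pair ?_ ?_ (fun h => Finset.mem_univ _)
      C.pair_invol
    · intro h
      by_cases hf : C.pair h = h
      · simp [hf]
      · have hf2 : C.pair (C.pair h) ≠ C.pair h := by
          rw [C.pair_invol]; exact fun e => hf e.symm
        obtain ⟨hd, hw, t, -, hv⟩ := C.pair_rules h hf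
        simp only [if_neg hf, if_neg hf2, hd, hw, hv, cross, Prod.fst_neg,
          Prod.snd_neg, Prod.fst_add, Prod.snd_add, Prod.smul_fst,
          Prod.smul_snd, smul_eq_mul]
        push_cast; ring
    · intro h hne
      by_cases hf : C.pair h = h
      · simp [hf] at hne
      · exact hf
  have key : ∀ h : Fin n,
      (if C.pair h = h then (C.wt h : ℝ) * cross (C.vpos h) (C.dir h) else 0)
      = (C.wt h : ℝ) * cross (C.vpos h) (C.dir h)
        - (if C.pair h = h then (0:ℝ)
            else (C.wt h : ℝ) * cross (C.vpos h) (C.dir h)) := by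
    intro h; by_cases hf : C.pair h = h <;> simp [hf]
  simp only [key, Finset.sum_sub_distrib, hS, hcancel, sub_zero]
end
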